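/- Let p∈U_δ(p₀) and μ>0. The operator H_μ(p) has an eigenvalue lying in (M(p),∞) if and only if μ>μ(p), and in that case the eigenvalue E(μ,p) is unique; equivalently, the equation Δ(μ,p;z)=0 has a solution z∈(M(p),∞) if and only if μ>μ(p), and then the solution is unique. -/

import Mathlib

open MeasureTheory Real Filter Topology

noncomputable section

/-- The 3-torus `T³ = (ℝ/2πℤ)³` is modeled as `ℝ³ = Fin 3 → ℝ`; all functions involved
are required to be `2π`-periodic in each variable. -/
abbrev 𝕋 : Type := Fin 3 → ℝ

/-- The shift by `2π` times an integer vector (a period of the torus). -/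
def shift (v : Fin 3 → ℤ) : 𝕋 := fun i => 2 * Real.pi * (v i)

/-- A fundamental domain `(-π, π]³` of the torus, used as the integration domain. -/
def box : Set 𝕋 := Set.univ.pi fun _ => Set.Ioc (-Real.pi) Real.pi

/-!
For `z > M` an eigenvector `f` of `f ↦ W f + μ ⟨φ, f⟩ φ` satisfies `(z - W) f = μ ⟨φ, f⟩ φ`,
so `f` is a multiple of `φ / (z - W)` and `z` is an eigenvalue iff `Δ(z) = 1 - μ Ω(z)` vanishes.
Since `W < M` almost everywhere, `Ω` is strictly decreasing on `[M, ∞)`; it is continuous there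
by dominated convergence with the integrable majorant `φ² / (M - W)`, and tends to `0` at `∞`.
Hence `Ω(z) = μ⁻¹` has a solution `z > M` iff `μ⁻¹ < Ω(M)`, and at most one.
-/

lemma norm_sq_div_le_sq_div (x : ℝ) {a b : ℝ} (hb : 0 < b) (hba : b ≤ a) :
    ‖x ^ 2 / a‖ ≤ x ^ 2 / b := by
  rw [Real.norm_eq_abs, abs_div, abs_of_nonneg (sq_nonneg _), abs_of_pos (hb.trans_le hba)]
  gcongr

lemma sq_div_sub_lt_sq_div_sub {x a b c : ℝ} (hx : x ≠ 0) (hca : c < a) (hab : a < b) :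
    x ^ 2 / (b - c) < x ^ 2 / (a - c) :=
  div_lt_div_of_pos_left (by positivity) (by linarith) (by linarith)

namespace Friedrichs

variable {α : Type*} [MeasurableSpace α] {ν : Measure α} {φ W : α → ℝ} {M μ z : ℝ}

/-- `Ω(z)`. At `z = M` the integral may diverge and is then `0` by convention, so a hypothesis
`0 < omega ν φ W M` also asserts integrability. -/
def omega (ν : Measure α) (φ W : α → ℝ) (z : ℝ) : ℝ := ∫ s, φ s ^ 2 / (z - W s) ∂ν

/-- `Δ(μ; z)`. -/
def delta (ν : Measure α) (φ W : α → ℝ) (μ z : ℝ) : ℝ := 1 - μ * omega ν φ W z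

/-- `z` is an eigenvalue of the Friedrichs model `f ↦ W f + μ ⟨φ, f⟩ φ` on `L²(ν)`. -/
def HasEigenvalue (ν : Measure α) (φ W : α → ℝ) (μ z : ℝ) : Prop :=
  ∃ f : α → ℝ, MemLp f 2 ν ∧ ¬ f =ᵐ[ν] 0 ∧
    ∀ᵐ q ∂ν, W q * f q + μ * φ q * ∫ t, φ t * f t ∂ν = z * f q

lemma delta_eq_zero_iff (hμ : 0 < μ) : delta ν φ W μ z = 0 ↔ omega ν φ W z = μ⁻¹ := by
  rw [delta, sub_eq_zero, eq_comm, mul_comm, ← eq_div_iff hμ.ne', one_div]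

lemma not_ae_eq_zero_of_omega_pos (h : 0 < omega ν φ W M) : ¬ φ =ᵐ[ν] 0 := by
  intro h0
  refine h.ne' (integral_eq_zero_of_ae ?_)
  filter_upwards [h0] with s hs
  simp [hs]

lemma aestronglyMeasurable_sq_div_sub (hφ : AEStronglyMeasurable φ ν)
    (hW : AEStronglyMeasurable W ν) (z : ℝ) :
    AEStronglyMeasurable (fun s => φ s ^ 2 / (z - W s)) ν :=
  (hφ.pow 2).div₀ (aestronglyMeasurable_const.sub hW)

lemma ae_eq_of_eigen_equation (hWM : ∀ᵐ s ∂ν, W s < M) (hz : M < z) {f : α → ℝ} {c : ℝ}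
    (hf : ∀ᵐ q ∂ν, W q * f q + μ * φ q * c = z * f q) :
    f =ᵐ[ν] fun q => μ * c * (φ q / (z - W q)) := by
  filter_upwards [hf, hWM] with q hq hqM
  rw [mul_div_assoc', eq_div_iff (sub_pos.2 (hqM.trans hz)).ne']
  linear_combination -hq

variable (hφ : MemLp φ 2 ν) (hW : AEStronglyMeasurable W ν) (hWM : ∀ᵐ s ∂ν, W s < M)
include hφ hW hWM

lemma integrable_sq_div_sub (hz : M < z) : Integrable (fun s => φ s ^ 2 / (z - W s)) ν := by
  refine Integrable.mono' (hφ.integrable_sq.div_const (z - M))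
    (aestronglyMeasurable_sq_div_sub hφ.1 hW z) ?_
  filter_upwards [hWM] with s hs
  exact norm_sq_div_le_sq_div _ (by linarith) (by linarith)

lemma strictAntiOn_omega (hΩ : 0 < omega ν φ W M) :
    StrictAntiOn (omega ν φ W) (Set.Ici M) := by
  have hint : ∀ z ∈ Set.Ici M, Integrable (fun s => φ s ^ 2 / (z - W s)) ν := by
    intro z hz
    rcases (Set.mem_Ici.1 hz).eq_or_lt with rfl | hz
    · exact Integrable.of_integral_ne_zero hΩ.ne'
    · exact integrable_sq_div_sub hφ hW hWM hz
  intro z₁ hz₁ z₂ hz₂ h12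
  have hMz₁ : M ≤ z₁ := hz₁
  rw [← sub_pos, omega, omega, ← integral_sub (hint z₁ hz₁) (hint z₂ hz₂)]
  refine (integral_pos_iff_support_of_nonneg_ae ?_ ((hint z₁ hz₁).sub (hint z₂ hz₂))).2 ?_
  · filter_upwards [hWM] with s hs
    exact sub_nonneg.2 (div_le_div_of_nonneg_left (sq_nonneg _) (by linarith) (by linarith))
  · refine pos_iff_ne_zero.2 fun h0 => not_ae_eq_zero_of_omega_pos hΩ ?_
    filter_upwards [measure_eq_zero_iff_ae_notMem.1 h0, hWM] with s hs hsM
    by_contra hφs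
    exact hs (sub_pos.2 (sq_div_sub_lt_sq_div_sub hφs (by linarith) h12)).ne'

lemma continuousOn_omega (hΩ : 0 < omega ν φ W M) :
    ContinuousOn (omega ν φ W) (Set.Ici M) := by
  refine continuousOn_of_dominated (fun z _ => aestronglyMeasurable_sq_div_sub hφ.1 hW z)
    (fun z hz => ?_) (Integrable.of_integral_ne_zero hΩ.ne') ?_
  · filter_upwards [hWM] with s hs
    exact norm_sq_div_le_sq_div _ (sub_pos.2 hs) (by linarith [Set.mem_Ici.1 hz])
  · filter_upwards [hWM] with s hs
    exact continuousOn_const.div (continuousOn_id.sub continuousOn_const)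
      fun z hz => (sub_pos.2 (hs.trans_le hz)).ne'

lemma tendsto_omega_atTop : Tendsto (omega ν φ W) atTop (𝓝 0) := by
  have := tendsto_integral_filter_of_dominated_convergence (μ := ν) (l := atTop)
    (F := fun z s => φ s ^ 2 / (z - W s)) (f := 0) _
    (Eventually.of_forall fun z => aestronglyMeasurable_sq_div_sub hφ.1 hW z) ?_
    (integrable_sq_div_sub hφ hW hWM (lt_add_one M)) ?_
  · rwa [Pi.zero_def, integral_zero] at this
  · filter_upwards [eventually_ge_atTop (M + 1)] with z hz
    filter_upwards [hWM] with s hs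
    exact norm_sq_div_le_sq_div _ (by linarith) (by linarith)
  · filter_upwards with s
    exact tendsto_const_nhds.div_atTop (tendsto_atTop_add_const_right _ _ tendsto_id)

lemma exists_omega_eq_iff (hΩ : 0 < omega ν φ W M) {c : ℝ} (hc : 0 < c) :
    (∃ z, M < z ∧ omega ν φ W z = c) ↔ c < omega ν φ W M := by
  constructor
  · rintro ⟨z, hz, rfl⟩
    exact strictAntiOn_omega hφ hW hWM hΩ (Set.mem_Ici.2 le_rfl) hz.le hz
  · intro h
    obtain ⟨b, hb, hMb⟩ := (((tendsto_omega_atTop hφ hW hWM).eventually (gt_mem_nhds hc)).and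
      (eventually_gt_atTop M)).exists
    obtain ⟨z, hz, hzc⟩ := intermediate_value_Ioo' hMb.le
      ((continuousOn_omega hφ hW hWM hΩ).mono Set.Icc_subset_Ici_self) ⟨hb, h⟩
    exact ⟨z, hz.1, hzc⟩

lemma exists_delta_eq_zero_iff (hΩ : 0 < omega ν φ W M) (hμ : 0 < μ) :
    (∃ z, M < z ∧ delta ν φ W μ z = 0) ↔ (omega ν φ W M)⁻¹ < μ := by
  simp_rw [delta_eq_zero_iff hμ]
  rw [exists_omega_eq_iff hφ hW hWM hΩ (inv_pos.2 hμ), inv_lt_comm₀ hμ hΩ]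

lemma eq_of_delta_eq_zero (hΩ : 0 < omega ν φ W M) (hμ : 0 < μ) {z₁ z₂ : ℝ}
    (hz₁ : M < z₁) (hz₂ : M < z₂) (h₁ : delta ν φ W μ z₁ = 0) (h₂ : delta ν φ W μ z₂ = 0) :
    z₁ = z₂ :=
  (strictAntiOn_omega hφ hW hWM hΩ).injOn hz₁.le hz₂.le <| by
    rw [(delta_eq_zero_iff hμ).1 h₁, (delta_eq_zero_iff hμ).1 h₂]

lemma hasEigenvalue_iff (hφ0 : ¬ φ =ᵐ[ν] 0) (hz : M < z) :
    HasEigenvalue ν φ W μ z ↔ delta ν φ W μ z = 0 := by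
  constructor
  · rintro ⟨f, -, hf0, hf⟩
    set c := ∫ t, φ t * f t ∂ν
    have hfc := ae_eq_of_eigen_equation hWM hz hf
    have hc : c = μ * c * omega ν φ W z :=
      calc c = ∫ t, μ * c * (φ t ^ 2 / (z - W t)) ∂ν :=
            integral_congr_ae (hfc.mono fun t ht => by simp only [ht]; ring)
        _ = μ * c * omega ν φ W z := integral_const_mul _ _
    have hc0 : c ≠ 0 := fun h => hf0 (hfc.trans (by simp only [h, mul_zero, zero_mul]; rfl))
    refine (mul_eq_zero.1 ?_).resolve_left hc0
    rw [delta]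
    linear_combination hc
  · intro hΔ
    have hμΩ : μ * omega ν φ W z = 1 := by rw [delta] at hΔ; linarith
    have hzW : ∀ᵐ q ∂ν, 0 < z - W q := hWM.mono fun q hq => by linarith
    refine ⟨fun q => φ q / (z - W q), ?_, ?_, ?_⟩
    · refine hφ.of_le_mul (c := (z - M)⁻¹) (hφ.1.div₀ (aestronglyMeasurable_const.sub hW)) ?_
      filter_upwards [hWM] with q hq
      rw [norm_div, Real.norm_of_nonneg (by linarith : 0 ≤ z - W q), div_eq_inv_mul]
      gcongr
    · intro h0
      refine hφ0 ?_
      filter_upwards [h0, hzW] with q hq hqz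
      exact (div_eq_zero_iff.1 hq).resolve_right hqz.ne'
    · have hint : ∫ t, φ t * (φ t / (z - W t)) ∂ν = omega ν φ W z :=
        integral_congr_ae (Eventually.of_forall fun t => by ring)
      filter_upwards [hzW] with q hq
      rw [hint, mul_right_comm μ, hμΩ]
      field_simp
      ring

lemma exists_hasEigenvalue_iff (hΩ : 0 < omega ν φ W M) (hμ : 0 < μ) :
    (∃ z, M < z ∧ HasEigenvalue ν φ W μ z) ↔ (omega ν φ W M)⁻¹ < μ := by
  rw [← exists_delta_eq_zero_iff hφ hW hWM hΩ hμ]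
  exact exists_congr fun z => and_congr_right fun hz =>
    hasEigenvalue_iff hφ hW hWM (not_ae_eq_zero_of_omega_pos hΩ) hz

lemma eq_of_hasEigenvalue (hΩ : 0 < omega ν φ W M) (hμ : 0 < μ) {z₁ z₂ : ℝ}
    (hz₁ : M < z₁) (hz₂ : M < z₂) (h₁ : HasEigenvalue ν φ W μ z₁)
    (h₂ : HasEigenvalue ν φ W μ z₂) : z₁ = z₂ :=
  have hφ0 := not_ae_eq_zero_of_omega_pos hΩ
  eq_of_delta_eq_zero hφ hW hWM hΩ hμ hz₁ hz₂ ((hasEigenvalue_iff hφ hW hWM hφ0 hz₁).1 h₁)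
    ((hasEigenvalue_iff hφ hW hWM hφ0 hz₂).1 h₂)

end Friedrichs

lemma ContinuousOn.memLp_restrict_of_isCompact {X : Type*} [TopologicalSpace X]
    [MeasurableSpace X] [OpensMeasurableSpace X] {μ : Measure X} [IsFiniteMeasureOnCompacts μ]
    {K : Set X} {f : X → ℝ} (hK : IsCompact K) (hKm : MeasurableSet K) (hf : ContinuousOn f K)
    (p : ENNReal) : MemLp f p (μ.restrict K) := by
  have : IsFiniteMeasure (μ.restrict K) := isFiniteMeasure_restrict.2 hK.measure_lt_top.ne
  obtain ⟨C, hC⟩ := hK.exists_bound_of_continuousOn hf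
  exact .of_bound (hf.aestronglyMeasurable_of_isCompact hK hKm) C
    ((ae_restrict_iff' hKm).2 (Eventually.of_forall hC))

lemma ae_lt_of_forall_le_of_countable {α : Type*} [MeasurableSpace α] {ν : Measure α}
    [NullSingletonClass ν] {f : α → ℝ} {M : ℝ} (hle : ∀ x, f x ≤ M)
    (hc : {x | f x = M}.Countable) : ∀ᵐ x ∂ν, f x < M := by
  filter_upwards [measure_eq_zero_iff_ae_notMem.1 (hc.measure_zero ν)] with x hx
  exact (hle x).lt_of_ne hx

lemma box_subset_Icc : box ⊆ Set.Icc (fun _ => -π) fun _ => π :=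
  fun _ hx => ⟨fun i => (hx i (Set.mem_univ i)).1.le, fun i => (hx i (Set.mem_univ i)).2⟩

lemma Continuous.memLp_restrict_box {f : 𝕋 → ℝ} (hf : Continuous f) (p : ENNReal) :
    MemLp f p (volume.restrict box) :=
  (hf.continuousOn.memLp_restrict_of_isCompact isCompact_Icc measurableSet_Icc p).mono_measure
    (Measure.restrict_mono box_subset_Icc le_rfl)

theorem statement13_general
    (φ : 𝕋 → ℝ)
    (hφa : AnalyticOnNhd ℝ φ Set.univ)
    (w : 𝕋 → 𝕋 → ℝ)
    (hwa : AnalyticOnNhd ℝ (fun x : 𝕋 × 𝕋 => w x.1 x.2) Set.univ)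
    (p₀ : 𝕋)
    (δ : ℝ) (q0 : 𝕋 → 𝕋)
    (hq0max : ∀ p ∈ Metric.ball p₀ δ, ∀ q : 𝕋, w p q ≤ w p (q0 p))
    (hq0uniq : ∀ p ∈ Metric.ball p₀ δ, ∀ q : 𝕋, w p q = w p (q0 p) →
      ∃ v : Fin 3 → ℤ, q = q0 p + shift v)
    (p : 𝕋) (hp : p ∈ Metric.ball p₀ δ) (μ : ℝ) (hμ : 0 < μ)
    (hΩ : 0 < (∫ s in box, φ s ^ 2 / (w p (q0 p) - w p s))) :
    ((∃ z : ℝ, w p (q0 p) < z ∧ ∃ f : 𝕋 → ℝ,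
        MemLp f 2 (volume.restrict box) ∧ ¬ f =ᵐ[volume.restrict box] 0 ∧
        (∀ᵐ q ∂(volume.restrict box),
          w p q * f q + μ * φ q * ∫ t in box, φ t * f t = z * f q)) ↔ (∫ s in box, φ s ^ 2 / (w p (q0 p) - w p s))⁻¹ < μ) ∧
    (∀ z₁ z₂ : ℝ, w p (q0 p) < z₁ → w p (q0 p) < z₂ →
      (∃ f : 𝕋 → ℝ, MemLp f 2 (volume.restrict box) ∧ ¬ f =ᵐ[volume.restrict box] 0 ∧
        (∀ᵐ q ∂(volume.restrict box),
          w p q * f q + μ * φ q * ∫ t in box, φ t * f t = z₁ * f q)) →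
      (∃ f : 𝕋 → ℝ, MemLp f 2 (volume.restrict box) ∧ ¬ f =ᵐ[volume.restrict box] 0 ∧
        (∀ᵐ q ∂(volume.restrict box),
          w p q * f q + μ * φ q * ∫ t in box, φ t * f t = z₂ * f q)) →
      z₁ = z₂) ∧
    ((∃ z : ℝ, w p (q0 p) < z ∧ 1 - μ * ∫ s in box, φ s ^ 2 / (z - w p s) = 0) ↔
      (∫ s in box, φ s ^ 2 / (w p (q0 p) - w p s))⁻¹ < μ) ∧
    (∀ z₁ z₂ : ℝ, w p (q0 p) < z₁ → w p (q0 p) < z₂ →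
      1 - μ * ∫ s in box, φ s ^ 2 / (z₁ - w p s) = 0 →
      1 - μ * ∫ s in box, φ s ^ 2 / (z₂ - w p s) = 0 → z₁ = z₂) := by
  have hφ : MemLp φ 2 (volume.restrict box) :=
    (continuousOn_univ.1 hφa.continuousOn).memLp_restrict_box 2
  have hW : AEStronglyMeasurable (w p) (volume.restrict box) :=
    ((continuousOn_univ.1 hwa.continuousOn).comp (Continuous.prodMk_right p)).aestronglyMeasurable
  have hWM : ∀ᵐ s ∂(volume.restrict box), w p s < w p (q0 p) :=
    ae_lt_of_forall_le_of_countable (hq0max p hp) <|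
      (Set.countable_range fun v => q0 p + shift v).mono fun q hq =>
        (hq0uniq p hp q hq).imp fun _ hv => hv.symm
  exact ⟨Friedrichs.exists_hasEigenvalue_iff hφ hW hWM hΩ hμ,
    fun _ _ => Friedrichs.eq_of_hasEigenvalue hφ hW hWM hΩ hμ,
    Friedrichs.exists_delta_eq_zero_iff hφ hW hWM hΩ hμ,
    fun _ _ => Friedrichs.eq_of_delta_eq_zero hφ hW hWM hΩ hμ⟩

/-- Let `p ∈ U_δ(p₀)` and `μ > 0`.  The operator `H_μ(p)` has an
eigenvalue in `(M(p), ∞)` if and only if `μ > μ(p)`, and in that case the eigenvalue is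
unique; equivalently `Δ(μ,p;z) = 0` has a solution `z ∈ (M(p), ∞)` iff `μ > μ(p)`, and
then the solution is unique. -/
theorem statement13
    (φ : 𝕋 → ℝ)
    (hφa : AnalyticOnNhd ℝ φ Set.univ)
    (hφper : ∀ (x : 𝕋) (v : Fin 3 → ℤ), φ (x + shift v) = φ x)
    (hφnt : φ ≠ 0)
    (w : 𝕋 → 𝕋 → ℝ)
    (hwa : AnalyticOnNhd ℝ (fun x : 𝕋 × 𝕋 => w x.1 x.2) Set.univ)
    (hwper : ∀ (p q : 𝕋) (v u : Fin 3 → ℤ), w (p + shift v) (q + shift u) = w p q)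
    (p₀ q₀ : 𝕋)
    (hmax : ∀ p q : 𝕋, w p q ≤ w p₀ q₀)
    (huniq : ∀ p q : 𝕋, w p q = w p₀ q₀ →
      ∃ v u : Fin 3 → ℤ, p = p₀ + shift v ∧ q = q₀ + shift u)
    (hgrad : fderiv ℝ (fun x : 𝕋 × 𝕋 => w x.1 x.2) (p₀, q₀) = 0)
    (hhess : ∀ v : 𝕋 × 𝕋, v ≠ 0 →
      iteratedFDeriv ℝ 2 (fun x : 𝕋 × 𝕋 => w x.1 x.2) (p₀, q₀) ![v, v] < 0)
    (δ : ℝ) (hδ : 0 < δ) (q0 : 𝕋 → 𝕋)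
    (hq0a : AnalyticOnNhd ℝ q0 (Metric.ball p₀ δ))
    (hq0max : ∀ p ∈ Metric.ball p₀ δ, ∀ q : 𝕋, w p q ≤ w p (q0 p))
    (hq0uniq : ∀ p ∈ Metric.ball p₀ δ, ∀ q : 𝕋, w p q = w p (q0 p) →
      ∃ v : Fin 3 → ℤ, q = q0 p + shift v)
    (hq0grad : ∀ p ∈ Metric.ball p₀ δ, fderiv ℝ (w p) (q0 p) = 0)
    (hq0hess : ∀ p ∈ Metric.ball p₀ δ, ∀ v : 𝕋, v ≠ 0 →
      iteratedFDeriv ℝ 2 (w p) (q0 p) ![v, v] < 0)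
    (p : 𝕋) (hp : p ∈ Metric.ball p₀ δ) (μ : ℝ) (hμ : 0 < μ)
    (hΩ : 0 < (∫ s in box, φ s ^ 2 / (w p (q0 p) - w p s))) :
    ((∃ z : ℝ, w p (q0 p) < z ∧ ∃ f : 𝕋 → ℝ,
        MemLp f 2 (volume.restrict box) ∧ ¬ f =ᵐ[volume.restrict box] 0 ∧
        (∀ᵐ q ∂(volume.restrict box),
          w p q * f q + μ * φ q * ∫ t in box, φ t * f t = z * f q)) ↔ (∫ s in box, φ s ^ 2 / (w p (q0 p) - w p s))⁻¹ < μ) ∧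
    (∀ z₁ z₂ : ℝ, w p (q0 p) < z₁ → w p (q0 p) < z₂ →
      (∃ f : 𝕋 → ℝ, MemLp f 2 (volume.restrict box) ∧ ¬ f =ᵐ[volume.restrict box] 0 ∧
        (∀ᵐ q ∂(volume.restrict box),
          w p q * f q + μ * φ q * ∫ t in box, φ t * f t = z₁ * f q)) →
      (∃ f : 𝕋 → ℝ, MemLp f 2 (volume.restrict box) ∧ ¬ f =ᵐ[volume.restrict box] 0 ∧
        (∀ᵐ q ∂(volume.restrict box),
          w p q * f q + μ * φ q * ∫ t in box, φ t * f t = z₂ * f q)) →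
      z₁ = z₂) ∧
    ((∃ z : ℝ, w p (q0 p) < z ∧ 1 - μ * ∫ s in box, φ s ^ 2 / (z - w p s) = 0) ↔
      (∫ s in box, φ s ^ 2 / (w p (q0 p) - w p s))⁻¹ < μ) ∧
    (∀ z₁ z₂ : ℝ, w p (q0 p) < z₁ → w p (q0 p) < z₂ →
      1 - μ * ∫ s in box, φ s ^ 2 / (z₁ - w p s) = 0 →
      1 - μ * ∫ s in box, φ s ^ 2 / (z₂ - w p s) = 0 → z₁ = z₂) :=
  statement13_general φ hφa w hwa p₀ δ q0 hq0max hq0uniq p hp μ hμ hΩ
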